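/- arXiv:1708.09112 — 4 statements merged into one kernel-verified Lean document; each statement's English description precedes it below -/
import Mathlib

section
/- The function U_{λ,α}(x) = λ^{(N-2)/2} / (1 + λ^{2+α}|x|^{2+α})^{(N-2)/(2+α)} satisfies -ΔU = (N-2)(N+α)|x|^α U^{(N+2+2α)/(N-2)} for all x in R^N \ {0}. -/
open scoped BigOperators

/-- The Euclidean Laplacian: sum of second partial derivatives. -/
noncomputable def lap {N : ℕ} (u : EuclideanSpace ℝ (Fin N) → ℝ)
    (x : EuclideanSpace ℝ (Fin N)) : ℝ :=
  ∑ i : Fin N, fderiv ℝ (fun y => fderiv ℝ u y (EuclideanSpace.single i 1)) x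
    (EuclideanSpace.single i 1)

/-!
The bubble is radial: `U x = g (‖x‖²)` with `g s = c (1 + a s^β)^(-γ)`, where `c = λ^((N-2)/2)`,
`a = λ^(2+α)`, `β = (2+α)/2` and `γ = (N-2)/(2+α)`. For any profile `g`, differentiating
`∂ᵢ (g (‖x‖²)) = 2 xᵢ g' (‖x‖²)` once more and summing gives `Δ (g ∘ ‖·‖²) = 2N g' + 4 s g''` at
`s = ‖x‖²`. For this `g` the right-hand side collapses to
`-(N-2)(N+α) s^(α/2) · c a (1 + a s^β)^(-γ-2)`, and `s^(α/2) = |x|^α` while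
`c a (1 + a s^β)^(-γ-2) = U^{p_α}` because `γ p_α = γ + 2` and `c^{p_α} = c a`.
-/

open Filter Topology

section RadialLaplacian

variable {N : ℕ} {g : ℝ → ℝ} {g' : ℝ} {y : EuclideanSpace ℝ (Fin N)}

theorem hasFDerivAt_comp_norm_sq (hg : HasDerivAt g g' (‖y‖ ^ 2)) :
    HasFDerivAt (fun z => g (‖z‖ ^ 2)) (g' • (2 : ℕ) • innerSL ℝ y) y :=
  hg.comp_hasFDerivAt y (hasStrictFDerivAt_norm_sq y).hasFDerivAt

theorem fderiv_comp_norm_sq_single (hg : HasDerivAt g g' (‖y‖ ^ 2)) (i : Fin N) :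
    fderiv ℝ (fun z => g (‖z‖ ^ 2)) y (EuclideanSpace.single i 1) = g' * (2 * y i) := by
  simp [(hasFDerivAt_comp_norm_sq hg).fderiv, EuclideanSpace.inner_single_right]

theorem lap_comp_norm_sq {g' : ℝ → ℝ} {g'' : ℝ} {x : EuclideanSpace ℝ (Fin N)}
    (hg : ∀ᶠ s in 𝓝 (‖x‖ ^ 2), HasDerivAt g (g' s) s) (hg' : HasDerivAt g' g'' (‖x‖ ^ 2)) :
    lap (fun y => g (‖y‖ ^ 2)) x = 2 * N * g' (‖x‖ ^ 2) + 4 * ‖x‖ ^ 2 * g'' := by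
  have hnear : ∀ᶠ y in 𝓝 x, HasDerivAt g (g' (‖y‖ ^ 2)) (‖y‖ ^ 2) :=
    (continuous_norm.pow 2).continuousAt.eventually hg
  have hpartial (i : Fin N) :
      fderiv ℝ (fun y => fderiv ℝ (fun z => g (‖z‖ ^ 2)) y (EuclideanSpace.single i 1)) x
        (EuclideanSpace.single i 1) = 2 * g' (‖x‖ ^ 2) + 4 * g'' * x i ^ 2 := by
    have hev : (fun y => fderiv ℝ (fun z => g (‖z‖ ^ 2)) y (EuclideanSpace.single i 1))
        =ᶠ[𝓝 x] fun y => g' (‖y‖ ^ 2) * (2 * EuclideanSpace.proj i y) :=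
      hnear.mono fun y hy => fderiv_comp_norm_sq_single hy i
    have hD : HasFDerivAt (fun y => g' (‖y‖ ^ 2) * (2 * EuclideanSpace.proj i y)) _ x :=
      (hasFDerivAt_comp_norm_sq hg').mul
        ((EuclideanSpace.proj i : EuclideanSpace ℝ (Fin N) →L[ℝ] ℝ).hasFDerivAt.const_mul 2)
    rw [hev.fderiv_eq, hD.fderiv]
    simp only [PiLp.proj_apply, add_apply, smul_apply,
      PiLp.single_eq_same, smul_eq_mul, mul_one, coe_innerSL_apply,
      EuclideanSpace.inner_single_right, Real.ringHom_apply, one_mul, nsmul_eq_mul, Nat.cast_ofNat]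
    ring
  have hsum : ∑ i, x i ^ 2 = ‖x‖ ^ 2 := by simp [EuclideanSpace.norm_sq_eq]
  simp only [lap, hpartial, Finset.sum_add_distrib, ← Finset.mul_sum, hsum, Finset.sum_const,
    Finset.card_univ, Fintype.card_fin, nsmul_eq_mul]
  ring

end RadialLaplacian

section BubbleProfile

variable (c a β γ : ℝ)

noncomputable def bubbleProfile (s : ℝ) : ℝ := c * (1 + a * s ^ β) ^ (-γ)

noncomputable def bubbleProfileDeriv (s : ℝ) : ℝ :=
  -(c * γ * a * β) * (s ^ (β - 1) * (1 + a * s ^ β) ^ (-γ - 1))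

noncomputable def bubbleProfileDeriv2 (s : ℝ) : ℝ :=
  -(c * γ * a * β) * ((β - 1) * s ^ (β - 2) * (1 + a * s ^ β) ^ (-γ - 1)
    + s ^ (β - 1) * ((-γ - 1) * (1 + a * s ^ β) ^ (-γ - 2) * (a * (β * s ^ (β - 1)))))

variable {c a β γ} {s : ℝ}

theorem hasDerivAt_one_add_mul_rpow_rpow (p : ℝ) (ha : 0 ≤ a) (hs : 0 < s) :
    HasDerivAt (fun s => (1 + a * s ^ β) ^ p)
      (p * (1 + a * s ^ β) ^ (p - 1) * (a * (β * s ^ (β - 1)))) s := by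
  have hbase : 0 < 1 + a * s ^ β := by positivity
  exact (Real.hasDerivAt_rpow_const (Or.inl hbase.ne')).comp s
    (((Real.hasDerivAt_rpow_const (Or.inl hs.ne')).const_mul a).const_add 1)

theorem hasDerivAt_bubbleProfile (ha : 0 ≤ a) (hs : 0 < s) :
    HasDerivAt (bubbleProfile c a β γ) (bubbleProfileDeriv c a β γ s) s := by
  refine ((hasDerivAt_one_add_mul_rpow_rpow (β := β) (-γ) ha hs).const_mul c).congr_deriv ?_
  simp only [bubbleProfileDeriv]
  ring

theorem hasDerivAt_bubbleProfileDeriv (ha : 0 ≤ a) (hs : 0 < s) :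
    HasDerivAt (bubbleProfileDeriv c a β γ) (bubbleProfileDeriv2 c a β γ s) s := by
  have hpow := Real.hasDerivAt_rpow_const (p := β - 1) (Or.inl hs.ne')
  have hbase := hasDerivAt_one_add_mul_rpow_rpow (β := β) (-γ - 1) ha hs
  rw [show β - 1 - 1 = β - 2 by ring] at hpow
  rw [show -γ - 1 - 1 = -γ - 2 by ring] at hbase
  exact (hpow.mul hbase).const_mul _

theorem bubbleProfile_radial_identity {n α : ℝ} (hβ : β = (2 + α) / 2)
    (hγ : γ = (n - 2) / (2 + α)) (hα : 2 + α ≠ 0) (ha : 0 ≤ a) (hs : 0 < s) :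
    2 * n * bubbleProfileDeriv c a β γ s + 4 * s * bubbleProfileDeriv2 c a β γ s
      = -((n - 2) * (n + α) * s ^ (β - 1) * (c * a * (1 + a * s ^ β) ^ (-γ - 2))) := by
  have hbase : 0 < 1 + a * s ^ β := by positivity
  have e1 : (1 + a * s ^ β) ^ (-γ - 1) = (1 + a * s ^ β) ^ (-γ - 2) * (1 + a * s ^ β) := by
    rw [← Real.rpow_add_one hbase.ne']; ring_nf
  have e2 : s ^ β = s ^ (β - 1) * s := by
    rw [← Real.rpow_add_one hs.ne']; ring_nf
  have e3 : s ^ (β - 1) = s ^ (β - 2) * s := by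
    rw [← Real.rpow_add_one hs.ne']; ring_nf
  simp only [bubbleProfileDeriv, bubbleProfileDeriv2]
  rw [e1, e2, e3, hβ, hγ]
  field_simp
  ring

theorem bubbleProfile_rpow {lam n α : ℝ} (hlam : 0 < lam) (hc : c = lam ^ ((n - 2) / 2))
    (ha : a = lam ^ (2 + α)) (hγ : γ = (n - 2) / (2 + α)) (hn : n - 2 ≠ 0) (hα : 2 + α ≠ 0)
    (hs : 0 ≤ s) :
    bubbleProfile c a β γ s ^ ((n + 2 + 2 * α) / (n - 2))
      = c * a * (1 + a * s ^ β) ^ (-γ - 2) := by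
  have hbase : 0 ≤ 1 + a * s ^ β := by rw [ha]; positivity
  have hcpow : c ^ ((n + 2 + 2 * α) / (n - 2)) = c * a := by
    rw [hc, ha, ← Real.rpow_mul hlam.le, ← Real.rpow_add hlam]
    congr 1
    field_simp
    ring
  have hexp : -γ * ((n + 2 + 2 * α) / (n - 2)) = -γ - 2 := by
    rw [hγ]
    field_simp
    ring
  rw [bubbleProfile, Real.mul_rpow (by rw [hc]; positivity) (Real.rpow_nonneg hbase _),
    ← Real.rpow_mul hbase, hexp, hcpow]

end BubbleProfile

/-- The standard bubble `U_{λ,α}` solves `-ΔU = (N-2)(N+α)|x|^α U^{p_α}` away from the origin. -/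
theorem stmt0 (N : ℕ) (hN : 3 ≤ N) (α lam : ℝ) (hα : 0 < α) (hlam : 0 < lam)
    (U : EuclideanSpace ℝ (Fin N) → ℝ)
    (hU : U = fun x => lam ^ (((N : ℝ) - 2) / 2) *
      (1 + lam ^ (2 + α) * ‖x‖ ^ (2 + α)) ^ (-(((N : ℝ) - 2) / (2 + α)))) :
    ∀ x : EuclideanSpace ℝ (Fin N), x ≠ 0 →
      -lap U x = ((N : ℝ) - 2) * ((N : ℝ) + α) * ‖x‖ ^ α *
        (U x) ^ (((N : ℝ) + 2 + 2 * α) / ((N : ℝ) - 2)) := by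
  intro x hx
  have hN₂ : (N : ℝ) - 2 ≠ 0 := by
    have : (3 : ℝ) ≤ N := by exact_mod_cast hN
    linarith
  have hα₂ : 2 + α ≠ 0 := by linarith
  set c := lam ^ (((N : ℝ) - 2) / 2) with hc
  set a := lam ^ (2 + α) with ha
  set β := (2 + α) / 2 with hβ
  set γ := ((N : ℝ) - 2) / (2 + α) with hγ
  have ha₀ : 0 ≤ a := by positivity
  have hU' : U = fun y => bubbleProfile c a β γ (‖y‖ ^ 2) := by
    rw [hU]
    funext y
    rw [bubbleProfile, Real.rpow_div_two_eq_sqrt _ (sq_nonneg _), Real.sqrt_sq (norm_nonneg y)]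
  have ht : 0 < ‖x‖ ^ 2 := pow_pos (norm_pos_iff.mpr hx) 2
  have hlap : lap U x = 2 * N * bubbleProfileDeriv c a β γ (‖x‖ ^ 2)
      + 4 * ‖x‖ ^ 2 * bubbleProfileDeriv2 c a β γ (‖x‖ ^ 2) :=
    hU' ▸ lap_comp_norm_sq ((lt_mem_nhds ht).mono fun s hs => hasDerivAt_bubbleProfile ha₀ hs)
      (hasDerivAt_bubbleProfileDeriv ha₀ ht)
  have hnorm : ‖x‖ ^ α = (‖x‖ ^ 2) ^ (β - 1) := by
    rw [hβ, show (2 + α) / 2 - 1 = α / 2 by ring, Real.rpow_div_two_eq_sqrt _ (sq_nonneg _),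
      Real.sqrt_sq (norm_nonneg x)]
  rw [hlap, bubbleProfile_radial_identity hβ hγ hα₂ ha₀ ht, hU',
    bubbleProfile_rpow hlam hc ha hγ hN₂ hα₂ ht.le, hnorm]
  ring
end

section
/- If u is a positive radial C^2 function on the unit ball solving the Hénon ODE with u(1)=0, u'(0)=0, and uniqueness holds for the initial value problem with given center value, then the Dirichlet radial solution of the Hénon problem on the unit ball is unique: any two positive radial solutions u, v with u(1)=v(1)=0 satisfy u = v. Precisely: if u and v both solve w'' + ((N-1)/r)w' + r^α w^p = 0 on (0,1) with w > 0, w'(0)=0, w(1)=0, and for every a > 0 the initial value problem with w(0)=a, w'(0)=0 has at most one solution, then u = v on [0,1]. -/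
/-!
The Hénon equation is invariant under `w ↦ λ^{(2+α)/(p-1)} w(λ ·)`. If `u(0) > v(0)`, the
rescaling of `v` with the `λ > 1` that matches `u(0)` solves the same initial value problem as `u`
on `[0, R/λ)`, so it coincides with `u` there; but it vanishes at `R/λ < R`, where `u` is
positive. Hence `u(0) = v(0)` by symmetry, and uniqueness for the initial value problem gives
`u = v`.
-/

open Set

/-- `w` solves the radial Hénon ODE `w'' + ((N-1)/r) w' + r^α w^p = 0` on the set `s`. -/
def SolvesHenonODE (N : ℕ) (α p : ℝ) (w : ℝ → ℝ) (s : Set ℝ) : Prop :=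
  ∀ r ∈ s, deriv (deriv w) r + (((N : ℝ) - 1) / r) * deriv w r + r ^ α * w r ^ p = 0

noncomputable def henonRescale (α p l : ℝ) (v : ℝ → ℝ) (r : ℝ) : ℝ :=
  l ^ ((2 + α) / (p - 1)) * v (l * r)

def HenonIVPUnique (N : ℕ) (α p : ℝ) : Prop :=
  ∀ a : ℝ, 0 < a → ∀ b : ℝ, 0 < b → ∀ w₁ w₂ : ℝ → ℝ,
    SolvesHenonODE N α p w₁ (Ioo 0 b) → SolvesHenonODE N α p w₂ (Ioo 0 b) →
    ContDiffOn ℝ 2 w₁ (Ico 0 b) → ContDiffOn ℝ 2 w₂ (Ico 0 b) →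
    w₁ 0 = a → w₂ 0 = a → deriv w₁ 0 = 0 → deriv w₂ 0 = 0 →
    EqOn w₁ w₂ (Ico 0 b)

theorem deriv_const_mul_comp_mul_left {𝕜 : Type*} [NontriviallyNormedField 𝕜]
    (c l : 𝕜) (f : 𝕜 → 𝕜) :
    deriv (fun r => c * f (l * r)) = fun r => c * l * deriv f (l * r) := by
  funext r
  simp only [deriv_const_mul_field']
  rw [deriv_comp_mul_left, smul_eq_mul, mul_assoc]

theorem eqOn_Icc_of_eqOn_Ico {β : Type*} [TopologicalSpace β] [T2Space β] {f g : ℝ → β}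
    {a b : ℝ} (hab : a < b) (h : EqOn f g (Ico a b)) (hf : ContinuousOn f (Icc a b))
    (hg : ContinuousOn g (Icc a b)) : EqOn f g (Icc a b) :=
  h.of_subset_closure hf hg Ico_subset_Icc_self (closure_Ico hab.ne).ge

theorem SolvesHenonODE.mono {N : ℕ} {α p : ℝ} {w : ℝ → ℝ} {s t : Set ℝ}
    (hw : SolvesHenonODE N α p w t) (hst : s ⊆ t) : SolvesHenonODE N α p w s :=
  fun r hr => hw r (hst hr)

theorem ContDiffOn.henonRescale {n : WithTop ℕ∞} {v : ℝ → ℝ} {s : Set ℝ}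
    (hv : ContDiffOn ℝ n v s) (α p l : ℝ) :
    ContDiffOn ℝ n (henonRescale α p l v) ((l * ·) ⁻¹' s) :=
  contDiffOn_const.mul (hv.comp (contDiff_const.mul contDiff_id).contDiffOn (mapsTo_preimage _ _))

theorem deriv_henonRescale (α p l : ℝ) (v : ℝ → ℝ) :
    deriv (henonRescale α p l v) = fun r => l ^ ((2 + α) / (p - 1)) * l * deriv v (l * r) :=
  deriv_const_mul_comp_mul_left _ _ v

theorem SolvesHenonODE.henonRescale {N : ℕ} {α p R l : ℝ} {v : ℝ → ℝ}
    (hv : SolvesHenonODE N α p v (Ioo 0 R)) (hv_nonneg : ∀ r ∈ Ioo 0 R, 0 ≤ v r)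
    (hp : p ≠ 1) (hl : 0 < l) :
    SolvesHenonODE N α p (_root_.henonRescale α p l v) (Ioo 0 (R / l)) := by
  intro r ⟨hr0, hrR⟩
  have hlr : l * r ∈ Ioo 0 R := ⟨by positivity, by rwa [lt_div_iff₀' hl] at hrR⟩
  -- `(2 + α) / (p - 1)` is the exponent for which `r ^ α * w ^ p` scales like `w''`.
  have hpow : (l ^ ((2 + α) / (p - 1))) ^ p = l ^ ((2 + α) / (p - 1)) * l ^ 2 * l ^ α := by
    have ht : (2 + α) / (p - 1) * (p - 1) = 2 + α := div_mul_cancel₀ _ (sub_ne_zero.mpr hp)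
    rw [← Real.rpow_mul hl.le, ← Real.rpow_two, ← Real.rpow_add hl, ← Real.rpow_add hl]
    congr 1
    linear_combination ht
  rw [deriv_henonRescale, deriv_const_mul_comp_mul_left]
  calc _ = l ^ ((2 + α) / (p - 1)) * l ^ 2 * (deriv (deriv v) (l * r)
          + ((N : ℝ) - 1) / (l * r) * deriv v (l * r) + (l * r) ^ α * v (l * r) ^ p) := by
        simp only [_root_.henonRescale]
        rw [Real.mul_rpow (by positivity) (hv_nonneg _ hlr), hpow,
          Real.mul_rpow hl.le hr0.le]
        field_simp
    _ = 0 := by rw [hv _ hlr, mul_zero]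

theorem HenonIVPUnique.apply_zero_le_of_dirichlet {N : ℕ} {α p R : ℝ}
    (huniq : HenonIVPUnique N α p) (hα : -2 < α) (hp : 1 < p) (hR : 0 < R) {u v : ℝ → ℝ}
    (hu_reg : ContDiffOn ℝ 2 u (Icc 0 R)) (hv_reg : ContDiffOn ℝ 2 v (Icc 0 R))
    (hu_ode : SolvesHenonODE N α p u (Ioo 0 R)) (hv_ode : SolvesHenonODE N α p v (Ioo 0 R))
    (hu_pos : ∀ r ∈ Ico 0 R, 0 < u r) (hv_pos : ∀ r ∈ Ico 0 R, 0 < v r)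
    (hu0 : deriv u 0 = 0) (hv0 : deriv v 0 = 0) (hvR : v R = 0) :
    u 0 ≤ v 0 := by
  by_contra! hvu
  have ht : 0 < (2 + α) / (p - 1) := div_pos (by linarith) (by linarith)
  have hu0_pos := hu_pos 0 ⟨le_rfl, hR⟩
  have hv0_pos := hv_pos 0 ⟨le_rfl, hR⟩
  set l := (u 0 / v 0) ^ ((2 + α) / (p - 1))⁻¹
  have hl : 1 < l := Real.one_lt_rpow ((one_lt_div hv0_pos).2 hvu) (inv_pos.2 ht)
  have hl_pow : l ^ ((2 + α) / (p - 1)) = u 0 / v 0 := Real.rpow_inv_rpow (by positivity) ht.ne'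
  set w := henonRescale α p l v
  have hb : R / l < R := div_lt_self hR hl
  have hb_pos : 0 < R / l := by positivity
  have hw_reg : ContDiffOn ℝ 2 w (Icc 0 (R / l)) := by
    refine (hv_reg.henonRescale α p l).mono fun r ⟨hr0, hrb⟩ => ⟨by positivity, ?_⟩
    rwa [le_div_iff₀' (by positivity)] at hrb
  have hw0 : w 0 = u 0 := by
    simp only [w, henonRescale, mul_zero, hl_pow]
    field_simp
  have hw'0 : deriv w 0 = 0 := by simp [w, deriv_henonRescale, hv0]
  have hw_ode : SolvesHenonODE N α p w (Ioo 0 (R / l)) :=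
    hv_ode.henonRescale (fun r hr => (hv_pos r (Ioo_subset_Ico_self hr)).le) hp.ne' (by linarith)
  have huw : EqOn u w (Icc 0 (R / l)) := by
    refine eqOn_Icc_of_eqOn_Ico hb_pos ?_ (hu_reg.continuousOn.mono (Icc_subset_Icc_right hb.le))
      hw_reg.continuousOn
    exact huniq (u 0) hu0_pos (R / l) hb_pos u w
      (hu_ode.mono (Ioo_subset_Ioo_right hb.le)) hw_ode
      (hu_reg.mono fun r hr => ⟨hr.1, hr.2.le.trans hb.le⟩) (hw_reg.mono Ico_subset_Icc_self)
      rfl hw0 hu0 hw'0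
  have hwb : w (R / l) = 0 := by
    simp only [w, henonRescale, mul_div_cancel₀ R (by positivity : l ≠ 0), hvR, mul_zero]
  have hu_b := hu_pos (R / l) ⟨hb_pos.le, hb⟩
  rw [huw ⟨hb_pos.le, le_rfl⟩, hwb] at hu_b
  exact hu_b.false

theorem stmt2_general (N : ℕ) (α p : ℝ) (hα : 0 < α) (hp1 : 1 < p)
    (u v : ℝ → ℝ)
    (hu_reg : ContDiffOn ℝ 2 u (Icc 0 1)) (hv_reg : ContDiffOn ℝ 2 v (Icc 0 1))
    (hu_ode : SolvesHenonODE N α p u (Ioo 0 1))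
    (hv_ode : SolvesHenonODE N α p v (Ioo 0 1))
    (hu_pos : ∀ r ∈ Ico (0 : ℝ) 1, 0 < u r)
    (hv_pos : ∀ r ∈ Ico (0 : ℝ) 1, 0 < v r)
    (hu0 : deriv u 0 = 0) (hv0 : deriv v 0 = 0)
    (hu1 : u 1 = 0) (hv1 : v 1 = 0)
    (huniq : ∀ a : ℝ, 0 < a → ∀ b : ℝ, 0 < b → ∀ w₁ w₂ : ℝ → ℝ,
      SolvesHenonODE N α p w₁ (Ioo 0 b) → SolvesHenonODE N α p w₂ (Ioo 0 b) →
      ContDiffOn ℝ 2 w₁ (Ico 0 b) → ContDiffOn ℝ 2 w₂ (Ico 0 b) →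
      w₁ 0 = a → w₂ 0 = a → deriv w₁ 0 = 0 → deriv w₂ 0 = 0 →
      EqOn w₁ w₂ (Ico 0 b)) :
    EqOn u v (Icc 0 1) := by
  have hIVP : HenonIVPUnique N α p := huniq
  have h0 : u 0 = v 0 := le_antisymm
    (hIVP.apply_zero_le_of_dirichlet (by linarith) hp1 one_pos hu_reg hv_reg hu_ode hv_ode
      hu_pos hv_pos hu0 hv0 hv1)
    (hIVP.apply_zero_le_of_dirichlet (by linarith) hp1 one_pos hv_reg hu_reg hv_ode hu_ode
      hv_pos hu_pos hv0 hu0 hu1)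
  refine eqOn_Icc_of_eqOn_Ico one_pos ?_ hu_reg.continuousOn hv_reg.continuousOn
  exact huniq (u 0) (hu_pos 0 ⟨le_rfl, one_pos⟩) 1 one_pos u v hu_ode hv_ode
    (hu_reg.mono Ico_subset_Icc_self) (hv_reg.mono Ico_subset_Icc_self) rfl h0.symm hu0 hv0

/-- Uniqueness of the positive radial Dirichlet solution of the Hénon problem on the unit
ball, assuming uniqueness for the initial value problem. -/
theorem stmt2 (N : ℕ) (hN : 3 ≤ N) (α p : ℝ) (hα : 0 < α) (hp1 : 1 < p)
    (hp2 : p < ((N : ℝ) + 2 + 2 * α) / ((N : ℝ) - 2))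
    (u v : ℝ → ℝ)
    (hu_reg : ContDiffOn ℝ 2 u (Icc 0 1)) (hv_reg : ContDiffOn ℝ 2 v (Icc 0 1))
    (hu_ode : SolvesHenonODE N α p u (Ioo 0 1))
    (hv_ode : SolvesHenonODE N α p v (Ioo 0 1))
    (hu_pos : ∀ r ∈ Ico (0 : ℝ) 1, 0 < u r)
    (hv_pos : ∀ r ∈ Ico (0 : ℝ) 1, 0 < v r)
    (hu0 : deriv u 0 = 0) (hv0 : deriv v 0 = 0)
    (hu1 : u 1 = 0) (hv1 : v 1 = 0)
    (huniq : ∀ a : ℝ, 0 < a → ∀ b : ℝ, 0 < b → ∀ w₁ w₂ : ℝ → ℝ,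
      SolvesHenonODE N α p w₁ (Ioo 0 b) → SolvesHenonODE N α p w₂ (Ioo 0 b) →
      ContDiffOn ℝ 2 w₁ (Ico 0 b) → ContDiffOn ℝ 2 w₂ (Ico 0 b) →
      w₁ 0 = a → w₂ 0 = a → deriv w₁ 0 = 0 → deriv w₂ 0 = 0 →
      EqOn w₁ w₂ (Ico 0 b)) :
    EqOn u v (Icc 0 1) :=
  stmt2_general N α p hα hp1 u v hu_reg hv_reg hu_ode hv_ode hu_pos hv_pos hu0 hv0 hu1 hv1 huniq
end

section
/- The function z(r) = λ^{(2+α)/2} r^{(2+α)/2} / (1 + λ^{2+α} r^{2+α})^{(N+α)/(2+α)} satisfies the singular Sturm–Liouville equation -z'' - ((N-1)/r) z' - p_α C_{N,α} λ^{2+α} r^α (1 + λ^{2+α} r^{2+α})^{-2} z = Λ₁(α) z / r² on (0,∞), where Λ₁(α) = -(α+2)(2N+α-2)/4. -/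
open Topology

/-!
With `t = (λ r)^{2+α}` the function is `z = t^{1/2} (1 + t)^{-(N+α)/(2+α)}`. For any profile
`w = r^p (1 + c r^s)^q` and `t = c r^s`, the logarithmic derivative `g = r w'/w = p + q s t/(1+t)`
satisfies `r g' = q s² t/(1+t)²`, and `r² (w'' + m w'/r) = w (g² + (m-1) g + r g')`. The equation
thus becomes a rational identity in `t`: for `p = (2+α)/2` and `q = -(N+α)/(2+α)` the
`t`-dependence of `g² + (N-2) g + r g'` is exactly cancelled by the potential term.
-/

noncomputable def powProfile (c s p q x : ℝ) : ℝ := x ^ p * (1 + c * x ^ s) ^ q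

section powProfile

variable {c s p q r : ℝ}

theorem hasDerivAt_powProfile (hr : 0 < r) (hU : 1 + c * r ^ s ≠ 0) :
    HasDerivAt (powProfile c s p q)
      (p * powProfile c s (p - 1) q r + q * c * s * powProfile c s (p + s - 1) (q - 1) r) r := by
  have hpow : HasDerivAt (fun x : ℝ => x ^ p) (p * r ^ (p - 1)) r :=
    Real.hasDerivAt_rpow_const (Or.inl hr.ne')
  have hU' : HasDerivAt (fun x : ℝ => 1 + c * x ^ s) (c * (s * r ^ (s - 1))) r :=
    ((Real.hasDerivAt_rpow_const (Or.inl hr.ne')).const_mul c).const_add 1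
  refine (hpow.mul (hU'.rpow_const (p := q) (Or.inl hU))).congr_deriv ?_
  simp only [powProfile, add_sub_assoc, Real.rpow_add hr]
  ring

theorem deriv_powProfile_eventuallyEq (hc : 0 ≤ c) (hr : 0 < r) :
    deriv (powProfile c s p q) =ᶠ[𝓝 r] fun x =>
      p * powProfile c s (p - 1) q x + q * c * s * powProfile c s (p + s - 1) (q - 1) x := by
  filter_upwards [Ioi_mem_nhds hr] with x (hx : 0 < x)
  have hU : 0 < 1 + c * x ^ s := by positivity
  exact (hasDerivAt_powProfile hx hU.ne').deriv

theorem deriv_deriv_powProfile (hc : 0 ≤ c) (hr : 0 < r) :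
    deriv (deriv (powProfile c s p q)) r =
      p * ((p - 1) * powProfile c s (p - 1 - 1) q r
          + q * c * s * powProfile c s (p - 1 + s - 1) (q - 1) r)
        + q * c * s * ((p + s - 1) * powProfile c s (p + s - 1 - 1) (q - 1) r
          + (q - 1) * c * s * powProfile c s (p + s - 1 + s - 1) (q - 1 - 1) r) := by
  have hU : 0 < 1 + c * r ^ s := by positivity
  rw [(deriv_powProfile_eventuallyEq hc hr).deriv_eq]
  exact (((hasDerivAt_powProfile hr hU.ne').const_mul p).add
    ((hasDerivAt_powProfile hr hU.ne').const_mul (q * c * s))).deriv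

theorem deriv_deriv_add_div_mul_deriv_powProfile (m : ℝ) (hc : 0 ≤ c) (hr : 0 < r) :
    deriv (deriv (powProfile c s p q)) r + m / r * deriv (powProfile c s p q) r =
      powProfile c s p q r / r ^ 2 *
        ((p + q * s * (c * r ^ s) / (1 + c * r ^ s)) ^ 2
          + (m - 1) * (p + q * s * (c * r ^ s) / (1 + c * r ^ s))
          + q * s ^ 2 * (c * r ^ s) / (1 + c * r ^ s) ^ 2) := by
  have hU : 0 < 1 + c * r ^ s := by positivity
  rw [deriv_deriv_powProfile hc hr, (hasDerivAt_powProfile hr hU.ne').deriv]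
  simp only [powProfile, Real.rpow_sub_one hr.ne', Real.rpow_sub_one hU.ne', Real.rpow_add hr]
  field_simp
  ring

end powProfile

/-- The explicit function `z(r) = λ^{(2+α)/2} r^{(2+α)/2} (1+λ^{2+α} r^{2+α})^{-(N+α)/(2+α)}`
is an eigenfunction of the linearized radial Hénon operator with the Hardy term, with
eigenvalue `Λ₁(α) = -(α+2)(2N+α-2)/4`. -/
theorem stmt5 (N : ℕ) (hN : 3 ≤ N) (α lam : ℝ) (hα : 0 < α) (hlam : 0 < lam)
    (pα CNα Λ₁ : ℝ)
    (hpα : pα = ((N : ℝ) + 2 + 2 * α) / ((N : ℝ) - 2))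
    (hC : CNα = ((N : ℝ) - 2) * ((N : ℝ) + α))
    (hΛ : Λ₁ = -((α + 2) * (2 * (N : ℝ) + α - 2)) / 4)
    (z : ℝ → ℝ)
    (hz : z = fun r => lam ^ ((2 + α) / 2) * r ^ ((2 + α) / 2) *
      (1 + lam ^ (2 + α) * r ^ (2 + α)) ^ (-(((N : ℝ) + α) / (2 + α)))) :
    ∀ r : ℝ, 0 < r →
      -deriv (deriv z) r - (((N : ℝ) - 1) / r) * deriv z r
        - pα * CNα * lam ^ (2 + α) * r ^ α *
          (1 + lam ^ (2 + α) * r ^ (2 + α)) ^ (-(2 : ℝ)) * z r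
        = Λ₁ * z r / r ^ 2 := by
  intro r hr
  have hc : 0 ≤ lam ^ (2 + α) := by positivity
  have hU : 0 < 1 + lam ^ (2 + α) * r ^ (2 + α) := by positivity
  have hs : 2 + α ≠ 0 := by positivity
  have hN2 : (N : ℝ) - 2 ≠ 0 := by
    have : (3 : ℝ) ≤ N := by exact_mod_cast hN
    linarith
  have hzP : z = fun x => lam ^ ((2 + α) / 2) *
      powProfile (lam ^ (2 + α)) (2 + α) ((2 + α) / 2) (-(((N : ℝ) + α) / (2 + α))) x := by
    simp only [hz, powProfile, mul_assoc]
  have hL := deriv_deriv_add_div_mul_deriv_powProfile ((N : ℝ) - 1) hc hr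
    (s := 2 + α) (p := (2 + α) / 2) (q := -(((N : ℝ) + α) / (2 + α)))
  have hrα : r ^ α = r ^ (2 + α) / r ^ 2 := by
    rw [Real.rpow_add hr, Real.rpow_two]; field_simp
  rw [hzP, deriv_const_mul_field', deriv_const_mul_field']
  beta_reduce
  rw [Real.rpow_neg hU.le, Real.rpow_two, hrα, hpα, hC, hΛ]
  rw [eq_sub_of_add_eq hL]
  field_simp
  ring
end

section
/- Suppose f : (0,1] → R and g : [0,∞) → R are continuous, Λ < 0, and there exists r₀ > 0 such that s^{N-1} f(s) + Λ s^{N-3} < 0 for all s > r₀. If z : [0,R] → R is a C² solution of -z'' - ((N-1)/r)z' - f(r) z = Λ z/r² on (0,R) with z(0)=z(R)=0, z ≥ 0, z ≤ 1, and z'(R) < 0, then z'(r) < 0 for all r ∈ (r₀, R). -/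
/-!
Along a solution, the flux `w r = r ^ (N - 1) * z' r` satisfies
`w' = -(r ^ (N - 1) f + Λ r ^ (N - 3)) z`, which is nonnegative on `(r₀, R)` by the sign
condition and `z ≥ 0`; so `w` is nondecreasing there. If `z' r ≥ 0` at some `r ∈ (r₀, R)`, then
`w ≥ w r ≥ 0`, hence `z' ≥ 0` on `(r, R)`, so `z` is nondecreasing to the left of `R` and
`z' R ≥ 0`.
-/

open Set

theorem hasDerivAt_pow_mul_deriv_of_radial_eq {N : ℕ} (hN : 3 ≤ N) {Λ x : ℝ} {f z : ℝ → ℝ}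
    (hx : 0 < x) (hz : DifferentiableAt ℝ (deriv z) x)
    (hode :
      -deriv (deriv z) x - (((N : ℝ) - 1) / x) * deriv z x - f x * z x = Λ * z x / x ^ 2) :
    HasDerivAt (fun y => y ^ (N - 1) * deriv z y)
      (-((x ^ (N - 1) * f x + Λ * x ^ (N - 3)) * z x)) x := by
  obtain ⟨n, rfl⟩ : ∃ n, N = n + 3 := ⟨N - 3, by omega⟩
  rw [show n + 3 - 1 = n + 2 by omega, show n + 3 - 3 = n by omega]
  refine ((hasDerivAt_pow (n + 2) x).mul hz.hasDerivAt).congr_deriv ?_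
  field_simp at hode
  push_cast at hode ⊢
  linear_combination (-x ^ n) * hode

theorem monotoneOn_pow_mul_deriv_of_radial_eq {N : ℕ} (hN : 3 ≤ N) {Λ a b : ℝ} {f z : ℝ → ℝ}
    (ha : 0 ≤ a) (hz : DifferentiableOn ℝ (deriv z) (Ioo a b))
    (hode : ∀ x ∈ Ioo a b,
      -deriv (deriv z) x - (((N : ℝ) - 1) / x) * deriv z x - f x * z x = Λ * z x / x ^ 2)
    (hsign : ∀ x ∈ Ioo a b, x ^ (N - 1) * f x + Λ * x ^ (N - 3) ≤ 0)
    (hz_nonneg : ∀ x ∈ Ioo a b, 0 ≤ z x) :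
    MonotoneOn (fun x => x ^ (N - 1) * deriv z x) (Ioo a b) := by
  have hflux : ∀ x ∈ Ioo a b, HasDerivAt (fun y => y ^ (N - 1) * deriv z y)
      (-((x ^ (N - 1) * f x + Λ * x ^ (N - 3)) * z x)) x := fun x hx =>
    hasDerivAt_pow_mul_deriv_of_radial_eq hN (ha.trans_lt hx.1)
      (hz.differentiableAt (isOpen_Ioo.mem_nhds hx)) (hode x hx)
  refine monotoneOn_of_hasDerivWithinAt_nonneg (convex_Ioo a b) (HasDerivAt.continuousOn hflux)
    (f' := fun x => -((x ^ (N - 1) * f x + Λ * x ^ (N - 3)) * z x)) ?_ ?_ <;> rw [interior_Ioo]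
  · exact fun x hx => (hflux x hx).hasDerivWithinAt
  · exact fun x hx =>
      neg_nonneg.mpr (mul_nonpos_of_nonpos_of_nonneg (hsign x hx) (hz_nonneg x hx))

theorem deriv_neg_of_monotoneOn_pow_mul_deriv {n : ℕ} {a b : ℝ} {z : ℝ → ℝ} (ha : 0 ≤ a)
    (hz : DifferentiableOn ℝ z (Ioo a b))
    (hflux : MonotoneOn (fun x => x ^ n * deriv z x) (Ioo a b)) (hb : deriv z b < 0) :
    ∀ r ∈ Ioo a b, deriv z r < 0 := by
  intro r hr
  by_contra! hr_nonneg
  have hderiv_nonneg : ∀ s ∈ Ioo r b, 0 ≤ deriv z s := fun s hs => by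
    have hrs : r ^ n * deriv z r ≤ s ^ n * deriv z s :=
      hflux hr ⟨hr.1.trans hs.1, hs.2⟩ hs.1.le
    have hr_flux : 0 ≤ r ^ n * deriv z r := mul_nonneg (pow_nonneg (ha.trans hr.1.le) n) hr_nonneg
    exact nonneg_of_mul_nonneg_right (hr_flux.trans hrs) (pow_pos (ha.trans_lt (hr.1.trans hs.1)) n)
  have hmono : MonotoneOn z (Ioo r b) := by
    have hz' : DifferentiableOn ℝ z (Ioo r b) := hz.mono (Ioo_subset_Ioo_left hr.1.le)
    refine monotoneOn_of_deriv_nonneg (convex_Ioo r b) hz'.continuousOn ?_ ?_ <;> rw [interior_Ioo]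
    exacts [hz', hderiv_nonneg]
  have hb_diff : DifferentiableAt ℝ z b := differentiableAt_of_deriv_ne_zero hb.ne
  have hacc : AccPt b (Filter.principal (Ioo r b)) := by
    rw [accPt_principal_iff_nhdsWithin, sdiff_singleton_eq_self fun hb => lt_irrefl b hb.2]
    exact right_nhdsWithin_Ioo_neBot hr.2
  exact hb.not_ge (hb_diff.hasDerivAt.hasDerivWithinAt.nonneg_of_monotoneOn hacc hmono)

theorem stmt8_general (N : ℕ) (hN : 3 ≤ N) (R r₀ Λ : ℝ) (hr₀ : 0 < r₀) (f : ℝ → ℝ)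
    (hsign : ∀ s : ℝ, r₀ < s → s ^ (N - 1) * f s + Λ * s ^ (N - 3) < 0)
    (z : ℝ → ℝ) (hz_reg : ContDiffOn ℝ 2 z (Icc 0 R))
    (hz_ode : ∀ r ∈ Ioo (0 : ℝ) R,
      -deriv (deriv z) r - (((N : ℝ) - 1) / r) * deriv z r - f r * z r = Λ * z r / r ^ 2)
    (hz_nonneg : ∀ r ∈ Icc (0 : ℝ) R, 0 ≤ z r)
    (hzR' : deriv z R < 0) :
    ∀ r ∈ Ioo r₀ R, deriv z r < 0 := by
  have hsub : Ioo r₀ R ⊆ Icc 0 R := fun x hx => ⟨hr₀.le.trans hx.1.le, hx.2.le⟩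
  have hz : ContDiffOn ℝ 2 z (Ioo r₀ R) := hz_reg.mono hsub
  have hdz : ContDiffOn ℝ 1 (deriv z) (Ioo r₀ R) := hz.deriv_of_isOpen isOpen_Ioo (by norm_num)
  have hflux : MonotoneOn (fun x => x ^ (N - 1) * deriv z x) (Ioo r₀ R) :=
    monotoneOn_pow_mul_deriv_of_radial_eq hN hr₀.le (hdz.differentiableOn one_ne_zero)
      (fun x hx => hz_ode x ⟨hr₀.trans hx.1, hx.2⟩) (fun x hx => (hsign x hx.1).le)
      (fun x hx => hz_nonneg x (hsub hx))
  exact deriv_neg_of_monotoneOn_pow_mul_deriv hr₀.le (hz.differentiableOn two_ne_zero) hflux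
    hzR'

/-- Monotone-decay mechanism: under the sign condition
`s^{N-1} f(s) + Λ s^{N-3} < 0` for `s > r₀`, a nonnegative solution of the linearized
equation with `z(0)=z(R)=0`, `z ≤ 1` and `z'(R) < 0` satisfies `z' < 0` on `(r₀, R)`. -/
theorem stmt8 (N : ℕ) (hN : 3 ≤ N) (R r₀ Λ : ℝ) (hR : 0 < R) (hr₀ : 0 < r₀)
    (hr₀R : r₀ < R) (hΛ : Λ < 0) (f g : ℝ → ℝ)
    (hf : ContinuousOn f (Ioc 0 R)) (hg : ContinuousOn g (Ici 0))
    (hsign : ∀ s : ℝ, r₀ < s → s ^ (N - 1) * f s + Λ * s ^ (N - 3) < 0)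
    (z : ℝ → ℝ) (hz_reg : ContDiffOn ℝ 2 z (Icc 0 R))
    (hz_ode : ∀ r ∈ Ioo (0 : ℝ) R,
      -deriv (deriv z) r - (((N : ℝ) - 1) / r) * deriv z r - f r * z r = Λ * z r / r ^ 2)
    (hz0 : z 0 = 0) (hzR : z R = 0)
    (hz_nonneg : ∀ r ∈ Icc (0 : ℝ) R, 0 ≤ z r)
    (hz_le : ∀ r ∈ Icc (0 : ℝ) R, z r ≤ 1)
    (hzR' : deriv z R < 0) :
    ∀ r ∈ Ioo r₀ R, deriv z r < 0 :=
  stmt8_general N hN R r₀ Λ hr₀ f hsign z hz_reg hz_ode hz_nonneg hzR'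
end
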